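/- arXiv:2505.12562 — 6 statements merged into one kernel-verified Lean document; each statement's English description precedes it below -/
import Mathlib

section
/- Let a > 2 be real. Then the generalized Koebe function k_a is not injective on the open unit disk: there exist distinct points z₁ ≠ z₂ in 𝔻 with k_a(z₁) = k_a(z₂). In fact one may take z₂ = conj(z₁) where (1+z₁)/(1−z₁) = exp(iπ/a). -/
open Complex Metric

noncomputable def ka (a z : ℂ) : ℂ := 1 / (2 * a) * (((1 + z) / (1 - z)) ^ a - 1)

/-- for real `a > 2`, the generalized Koebe function is not injective on the
unit disk; one may take `z₂ = conj z₁` with `(1+z₁)/(1−z₁) = exp(iπ/a)`. -/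
theorem ka_not_injOn (a : ℝ) (ha : 2 < a) :
    ∃ z₁ z₂ : ℂ, z₁ ∈ ball (0 : ℂ) 1 ∧ z₂ ∈ ball (0 : ℂ) 1 ∧ z₁ ≠ z₂ ∧
      ka a z₁ = ka a z₂ ∧ z₂ = (starRingEnd ℂ) z₁ ∧
      (1 + z₁) / (1 - z₁) = Complex.exp (Complex.I * Real.pi / a) := by
  have ha0 : (0:ℝ) < a := by linarith
  have ha0' : (a:ℂ) ≠ 0 := by exact_mod_cast ha0.ne'
  set θ : ℝ := Real.pi / a with hθdef
  have hθpos : 0 < θ := div_pos Real.pi_pos ha0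
  have hθlt : θ < Real.pi / 2 := by
    rw [hθdef, div_lt_div_iff₀ ha0 (by norm_num)]
    nlinarith [Real.pi_pos]
  have hθlt' : θ < Real.pi := by linarith [Real.pi_pos]
  have hcos : 0 < Real.cos θ := Real.cos_pos_of_mem_Ioo ⟨by linarith, hθlt⟩
  have hsin : 0 < Real.sin θ := Real.sin_pos_of_pos_of_lt_pi hθpos hθlt'
  set w : ℂ := Complex.exp (↑θ * Complex.I) with hwdef
  have hwre : w.re = Real.cos θ := Complex.exp_ofReal_mul_I_re θ
  have hwim : w.im = Real.sin θ := Complex.exp_ofReal_mul_I_im θ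
  have hw1 : Complex.normSq w = 1 := by
    rw [Complex.normSq_apply, hwre, hwim]
    nlinarith [Real.sin_sq_add_cos_sq θ]
  have hwp : w + 1 ≠ 0 := by
    intro h
    have : (w + 1).re = 0 := by rw [h]; simp
    simp [Complex.add_re, hwre] at this
    linarith
  set z₁ : ℂ := (w - 1) / (w + 1) with hz₁
  have h1z : 1 - z₁ = 2 / (w + 1) := by
    rw [hz₁]; field_simp; ring
  have h1z' : 1 + z₁ = 2 * w / (w + 1) := by
    rw [hz₁]; field_simp; ring
  have hq : (1 + z₁) / (1 - z₁) = w := by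
    rw [h1z, h1z']
    field_simp
  have hz₂q : (1 + (starRingEnd ℂ) z₁) / (1 - (starRingEnd ℂ) z₁) = (starRingEnd ℂ) w := by
    rw [← hq]
    simp [map_div₀]
  have hball : z₁ ∈ ball (0 : ℂ) 1 := by
    rw [mem_ball_zero_iff, hz₁, norm_div, div_lt_one (norm_pos_iff.mpr hwp)]
    have h2 : ‖w - 1‖ ^ 2 < ‖w + 1‖ ^ 2 := by
      rw [Complex.sq_norm, Complex.sq_norm]
      simp only [Complex.normSq_apply, Complex.sub_re, Complex.sub_im, Complex.add_re,
        Complex.add_im, Complex.one_re, Complex.one_im, hwre, hwim]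
      nlinarith
    nlinarith [norm_nonneg (w - 1), norm_nonneg (w + 1)]
  have hcw : (starRingEnd ℂ) w = Complex.exp (↑(-θ) * Complex.I) := by
    rw [hwdef, ← Complex.exp_conj]
    congr 1
    simp only [map_mul, Complex.conj_ofReal, Complex.conj_I, Complex.ofReal_neg]
    ring
  have hne : z₁ ≠ (starRingEnd ℂ) z₁ := by
    intro h
    have him : z₁.im = 0 := by
      have := congrArg Complex.im h
      simp only [Complex.conj_im] at this
      linarith
    have : w = (starRingEnd ℂ) w := by rw [← hz₂q, ← h]; exact hq.symm
    have := congrArg Complex.im this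
    simp only [Complex.conj_im, hwim] at this
    linarith
  -- powers
  have hlogw : Complex.log w = ↑θ * Complex.I := by
    rw [hwdef]
    apply Complex.log_exp
    · simp only [Complex.mul_I_im, Complex.ofReal_re]; linarith [Real.pi_pos]
    · simp only [Complex.mul_I_im, Complex.ofReal_re]; linarith
  have hlogcw : Complex.log ((starRingEnd ℂ) w) = ↑(-θ) * Complex.I := by
    rw [hcw]
    apply Complex.log_exp
    · simp only [Complex.mul_I_im, Complex.ofReal_re]; linarith
    · simp only [Complex.mul_I_im, Complex.ofReal_re]; linarith [Real.pi_pos]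
  have haθ : (a:ℂ) * θ = Real.pi := by
    rw [hθdef]
    push_cast
    field_simp
  have hpow : w ^ (a:ℂ) = -1 := by
    rw [Complex.cpow_def_of_ne_zero (Complex.exp_ne_zero _), hlogw]
    rw [show (↑θ * Complex.I) * (a:ℂ) = ((a:ℂ) * θ) * Complex.I by ring, haθ,
      Complex.exp_pi_mul_I]
  have hpowc : ((starRingEnd ℂ) w) ^ (a:ℂ) = -1 := by
    have hcw0 : (starRingEnd ℂ) w ≠ 0 := by
      rw [hcw]; exact Complex.exp_ne_zero _
    rw [Complex.cpow_def_of_ne_zero hcw0, hlogcw]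
    rw [show (↑(-θ) * Complex.I) * (a:ℂ) = -(((a:ℂ) * θ) * Complex.I) by push_cast; ring,
      haθ, Complex.exp_neg, Complex.exp_pi_mul_I]
    norm_num
  refine ⟨z₁, (starRingEnd ℂ) z₁, hball, ?_, hne, ?_, rfl, ?_⟩
  · rwa [mem_ball_zero_iff, RCLike.norm_conj, ← mem_ball_zero_iff]
  · rw [ka, ka, hq, hz₂q, hpow, hpowc]
  · rw [hq, hwdef]
    congr 1
    rw [hθdef]
    push_cast
    ring
end

section
/- Let a be real, 0 ≤ λ < 1, and let f_{a,λ} = h + conj(g) be the generalized harmonic quasiconformal Koebe function, defined by h(0) = g(0) = 0, h − g = k_a, g' = λz·h'. If a > 2 then f_{a,λ} is not injective on the open unit disk. -/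
open Complex Metric

open Asymptotics

section Aux

lemma hasDerivAt_conj_conj {F : ℂ → ℂ} {d w : ℂ} (hf : HasDerivAt F d ((starRingEnd ℂ) w)) :
    HasDerivAt (fun z => (starRingEnd ℂ) (F ((starRingEnd ℂ) z))) ((starRingEnd ℂ) d) w := by
  rw [hasDerivAt_iff_isLittleO] at hf ⊢
  have htend : Filter.Tendsto (fun z : ℂ => (starRingEnd ℂ) z) (nhds w) (nhds ((starRingEnd ℂ) w)) :=
    (continuous_star.tendsto w)
  have h2 := hf.comp_tendsto htend
  rw [← isLittleO_norm_left, ← isLittleO_norm_right] at h2 ⊢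
  refine h2.congr (fun z => ?_) (fun z => ?_)
  · simp only [Function.comp, smul_eq_mul]
    have e : (starRingEnd ℂ) (F ((starRingEnd ℂ) z)) - (starRingEnd ℂ) (F ((starRingEnd ℂ) w)) -
        (z - w) * (starRingEnd ℂ) d = (starRingEnd ℂ) (F ((starRingEnd ℂ) z) -
        F ((starRingEnd ℂ) w) - ((starRingEnd ℂ) z - (starRingEnd ℂ) w) * d) := by
      simp only [map_sub, map_mul, Complex.conj_conj]
    rw [e, Complex.norm_conj]
  · simp only [Function.comp]
    rw [← map_sub, Complex.norm_conj]

lemma normSq_lt_one' {z : ℂ} (hz : z ∈ ball (0:ℂ) 1) : z.re * z.re + z.im * z.im < 1 := by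
  have h := mem_ball_zero_iff.mp hz
  have h2 := Complex.sq_norm z
  rw [Complex.normSq_apply] at h2
  nlinarith [norm_nonneg z]

lemma one_sub_ne' {z : ℂ} (hz : z ∈ ball (0:ℂ) 1) : (1 : ℂ) - z ≠ 0 := by
  intro hzero
  have h := mem_ball_zero_iff.mp hz
  have : z = 1 := by linear_combination -hzero
  rw [this] at h; simp at h

lemma re_pos_of_ball' {z : ℂ} (hz : z ∈ ball (0:ℂ) 1) : 0 < ((1 + z) / (1 - z)).re := by
  have hns : 0 < Complex.normSq (1 - z) := Complex.normSq_pos.mpr (one_sub_ne' hz)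
  have hlt := normSq_lt_one' hz
  rw [Complex.div_re, ← add_div]
  apply div_pos _ hns
  simp only [Complex.add_re, Complex.one_re, Complex.sub_re, Complex.add_im, Complex.one_im,
    Complex.sub_im]
  nlinarith

lemma arg_ne_pi_of_ball' {z : ℂ} (hz : z ∈ ball (0:ℂ) 1) : ((1 + z) / (1 - z)).arg ≠ Real.pi := by
  intro hpi
  have := (Complex.arg_eq_pi_iff.mp hpi).1
  linarith [re_pos_of_ball' hz]

lemma ka_conj (a : ℝ) {z : ℂ} (hz : z ∈ ball (0:ℂ) 1) :
    ka (a:ℂ) ((starRingEnd ℂ) z) = (starRingEnd ℂ) (ka (a:ℂ) z) := by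
  simp only [ka]
  have h1 : (1 + (starRingEnd ℂ) z) / (1 - (starRingEnd ℂ) z)
      = (starRingEnd ℂ) ((1 + z) / (1 - z)) := by
    simp [map_div₀]
  rw [h1, Complex.conj_cpow _ _ (arg_ne_pi_of_ball' hz), Complex.conj_ofReal]
  rw [map_mul, map_sub, map_one, map_div₀, map_one, map_mul, Complex.conj_ofReal]
  rw [map_ofNat]

lemma theta_mem (a : ℝ) (ha : 2 < a) : 0 < Real.pi/(2*a) ∧ Real.pi/(2*a) < Real.pi/4 := by
  have hpi := Real.pi_pos
  constructor
  · positivity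
  · rw [div_lt_div_iff₀ (by positivity) (by norm_num)]
    nlinarith

lemma tan_pos_lt (a : ℝ) (ha : 2 < a) :
    0 < Real.tan (Real.pi/(2*a)) ∧ Real.tan (Real.pi/(2*a)) < 1 := by
  obtain ⟨h1, h2⟩ := theta_mem a ha
  have hpi := Real.pi_pos
  constructor
  · exact Real.tan_pos_of_pos_of_lt_pi_div_two h1 (by nlinarith)
  · calc Real.tan (Real.pi/(2*a)) < Real.tan (Real.pi/4) :=
          Real.tan_lt_tan_of_nonneg_of_lt_pi_div_two (le_of_lt h1) (by nlinarith) h2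
      _ = 1 := Real.tan_pi_div_four

lemma mobius_eq (a : ℝ) (ha : 2 < a) :
    (1 + (Real.tan (Real.pi/(2*a)) : ℂ) * I) / (1 - (Real.tan (Real.pi/(2*a)) : ℂ) * I)
      = Complex.exp ((Real.pi/a : ℝ) * I) := by
  obtain ⟨h1, h2⟩ := theta_mem a ha
  have hpi := Real.pi_pos
  have hcos : Real.cos (Real.pi/(2*a)) ≠ 0 := by
    apply ne_of_gt
    apply Real.cos_pos_of_mem_Ioo
    constructor <;> nlinarith
  set θ := Real.pi/(2*a) with hθ
  have hdenom : (1 : ℂ) - (Real.tan θ : ℂ) * I ≠ 0 := by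
    intro hz
    have him := congrArg Complex.im hz
    simp at him
    exact (tan_pos_lt a ha).1.ne' him
  rw [div_eq_iff hdenom, Complex.exp_mul_I]
  have h2θ : Real.pi/a = 2*θ := by rw [hθ]; ring
  rw [h2θ]
  have hc : Complex.cos ((2*θ : ℝ) : ℂ) = ((Real.cos (2*θ) : ℝ) : ℂ) := by
    rw [Complex.ofReal_cos]
  have hs : Complex.sin ((2*θ : ℝ) : ℂ) = ((Real.sin (2*θ) : ℝ) : ℂ) := by
    rw [Complex.ofReal_sin]
  rw [hc, hs]
  have hcos2 : Real.cos (2*θ) = 2 * Real.cos θ ^ 2 - 1 := Real.cos_two_mul θ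
  have hsin2 : Real.sin (2*θ) = 2 * Real.sin θ * Real.cos θ := Real.sin_two_mul θ
  have htan : Real.tan θ = Real.sin θ / Real.cos θ := Real.tan_eq_sin_div_cos θ
  have hpyth : Real.sin θ ^ 2 + Real.cos θ ^ 2 = 1 := Real.sin_sq_add_cos_sq θ
  apply Complex.ext
  · simp only [Complex.add_re, Complex.one_re, Complex.mul_re, Complex.ofReal_re, Complex.I_re,
      Complex.ofReal_im, Complex.I_im, Complex.sub_re, Complex.add_im, Complex.one_im,
      Complex.mul_im, Complex.sub_im]
    rw [hcos2, hsin2, htan]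
    field_simp
    have hc2 : Real.cos θ * (Real.sin θ ^ 2 + Real.cos θ ^ 2) = Real.cos θ * 1 := by rw [hpyth]
    nlinarith [hc2]
  · simp only [Complex.add_re, Complex.one_re, Complex.mul_re, Complex.ofReal_re, Complex.I_re,
      Complex.ofReal_im, Complex.I_im, Complex.sub_re, Complex.add_im, Complex.one_im,
      Complex.mul_im, Complex.sub_im]
    rw [hcos2, hsin2, htan]
    field_simp
    have hc2 : Real.cos θ * (Real.sin θ ^ 2 + Real.cos θ ^ 2) = Real.cos θ * 1 := by rw [hpyth]
    nlinarith [hc2]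

lemma cpow_eq_neg_one (a : ℝ) (ha : 2 < a) :
    ((1 + (Real.tan (Real.pi/(2*a)) : ℂ) * I) / (1 - (Real.tan (Real.pi/(2*a)) : ℂ) * I)) ^ (a:ℂ)
      = -1 := by
  rw [mobius_eq a ha]
  have hpi := Real.pi_pos
  have hexp_ne : Complex.exp ((Real.pi/a : ℝ) * I) ≠ 0 := Complex.exp_ne_zero _
  rw [Complex.cpow_def_of_ne_zero hexp_ne]
  have haC : (a:ℂ) ≠ 0 := by exact_mod_cast (show a ≠ 0 by linarith)
  rw [Complex.log_exp]
  · rw [show ((Real.pi/a : ℝ) : ℂ) * I * (a:ℂ) = (Real.pi : ℝ) * I by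
      push_cast; field_simp]
    exact Complex.exp_pi_mul_I
  · simp only [Complex.mul_im, Complex.ofReal_re, Complex.I_im, Complex.ofReal_im, Complex.I_re]
    have hd1 : 0 < Real.pi / a := div_pos hpi (by linarith)
    have hd2 : Real.pi / a ≤ Real.pi := div_le_self (le_of_lt hpi) (by linarith)
    linarith
  · simp only [Complex.mul_im, Complex.ofReal_re, Complex.I_im, Complex.ofReal_im, Complex.I_re]
    have hd1 : 0 < Real.pi / a := div_pos hpi (by linarith)
    have hd2 : Real.pi / a ≤ Real.pi := div_le_self (le_of_lt hpi) (by linarith)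
    linarith

end Aux

/-- if `a > 2`, the generalized harmonic quasiconformal Koebe function
`f_{a,λ} = h + conj g` is not injective on the unit disk. -/
theorem f_a_l_not_injOn (a : ℝ) (ha : 2 < a) (l : ℝ) (hl : 0 ≤ l) (hl1 : l < 1)
    (h g : ℂ → ℂ)
    (hhd : DifferentiableOn ℂ h (ball (0 : ℂ) 1))
    (hgd : DifferentiableOn ℂ g (ball (0 : ℂ) 1))
    (hh0 : h 0 = 0) (hg0 : g 0 = 0)
    (hshear : ∀ z ∈ ball (0 : ℂ) 1, h z - g z = ka a z)
    (hdil : ∀ z ∈ ball (0 : ℂ) 1, deriv g z = (l : ℂ) * z * deriv h z) :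
    ¬ Set.InjOn (fun z => h z + (starRingEnd ℂ) (g z)) (ball (0 : ℂ) 1) := by
  intro hinj
  set S := ball (0 : ℂ) 1 with hS
  have hball : ∀ z ∈ S, (starRingEnd ℂ) z ∈ S := by
    intro z hz
    rw [hS, mem_ball_zero_iff] at hz ⊢
    simpa using hz
  have hopen : IsOpen S := isOpen_ball
  -- derivatives
  have hhda : ∀ z ∈ S, HasDerivAt h (deriv h z) z := fun z hz =>
    (hhd.differentiableAt (hopen.mem_nhds hz)).hasDerivAt
  have hgda : ∀ z ∈ S, HasDerivAt g (deriv g z) z := fun z hz =>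
    (hgd.differentiableAt (hopen.mem_nhds hz)).hasDerivAt
  set P : ℂ → ℂ := fun z => (starRingEnd ℂ) (h ((starRingEnd ℂ) z)) with hP
  set Q : ℂ → ℂ := fun z => (starRingEnd ℂ) (g ((starRingEnd ℂ) z)) with hQ
  have hPda : ∀ z ∈ S, HasDerivAt P ((starRingEnd ℂ) (deriv h ((starRingEnd ℂ) z))) z :=
    fun z hz => hasDerivAt_conj_conj (hhda _ (hball z hz))
  have hQda : ∀ z ∈ S, HasDerivAt Q ((starRingEnd ℂ) (deriv g ((starRingEnd ℂ) z))) z :=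
    fun z hz => hasDerivAt_conj_conj (hgda _ (hball z hz))
  -- P - h = Q - g on S
  have hDeq : ∀ z ∈ S, P z - h z = Q z - g z := by
    intro z hz
    have h1 : P z - Q z = (starRingEnd ℂ) (h ((starRingEnd ℂ) z) - g ((starRingEnd ℂ) z)) := by
      rw [hP, hQ, map_sub]
    rw [hshear _ (hball z hz)] at h1
    rw [ka_conj a hz] at h1
    simp only [Complex.conj_conj] at h1
    have h3 := hshear z hz
    linear_combination h1 - h3
  set D : ℂ → ℂ := fun z => P z - h z with hD
  have hDda : ∀ z ∈ S, HasDerivAt D 0 z := by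
    intro z hz
    have hz' := hball z hz
    have hd1 : HasDerivAt D ((starRingEnd ℂ) (deriv h ((starRingEnd ℂ) z)) - deriv h z) z :=
      (hPda z hz).sub (hhda z hz)
    have hd2 : HasDerivAt (fun w => Q w - g w)
        ((starRingEnd ℂ) (deriv g ((starRingEnd ℂ) z)) - deriv g z) z :=
      (hQda z hz).sub (hgda z hz)
    have heq : D =ᶠ[nhds z] (fun w => Q w - g w) := by
      filter_upwards [hopen.mem_nhds hz] with w hw
      exact hDeq w hw
    have hd2' : HasDerivAt D ((starRingEnd ℂ) (deriv g ((starRingEnd ℂ) z)) - deriv g z) z :=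
      hd2.congr_of_eventuallyEq heq
    have huniq := hd1.unique hd2'
    -- substitute dilatation
    rw [hdil _ hz', hdil _ hz] at huniq
    have hconj : (starRingEnd ℂ) ((l:ℂ) * (starRingEnd ℂ) z * deriv h ((starRingEnd ℂ) z))
        = (l:ℂ) * z * (starRingEnd ℂ) (deriv h ((starRingEnd ℂ) z)) := by
      rw [map_mul, map_mul, Complex.conj_conj, Complex.conj_ofReal]
    rw [hconj] at huniq
    -- (1 - l z) * X = 0
    have hlz : (1 : ℂ) - (l:ℂ) * z ≠ 0 := by
      intro h0
      have h1 : (l:ℂ) * z = 1 := by linear_combination -h0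
      have h2 : ‖(l:ℂ) * z‖ = 1 := by rw [h1]; simp
      rw [norm_mul] at h2
      have h3 : ‖(l:ℂ)‖ = |l| := by rw [Complex.norm_real, Real.norm_eq_abs]
      have h4 : ‖z‖ < 1 := by
        have := mem_ball_zero_iff.mp hz
        exact this
      have h5 : |l| < 1 := abs_lt.mpr ⟨by linarith, hl1⟩
      nlinarith [norm_nonneg z, norm_nonneg ((l:ℂ))]
    have hX : (starRingEnd ℂ) (deriv h ((starRingEnd ℂ) z)) - deriv h z = 0 := by
      have hfac : ((1:ℂ) - (l:ℂ) * z) *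
          ((starRingEnd ℂ) (deriv h ((starRingEnd ℂ) z)) - deriv h z) = 0 := by
        linear_combination huniq
      rcases mul_eq_zero.mp hfac with h' | h'
      · exact absurd h' hlz
      · exact h'
    have := hd1
    rwa [hX] at this
  -- D is constant 0 on S
  have hD0 : D 0 = 0 := by
    rw [hD]
    simp only [hP, map_zero, hh0]
    simp
  have h0S : (0:ℂ) ∈ S := mem_ball_self one_pos
  have hDdiff : DifferentiableOn ℂ D S := fun z hz =>
    ((hDda z hz).differentiableAt).differentiableWithinAt
  have hDfd : ∀ z ∈ S, fderivWithin ℂ D S z = 0 := by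
    intro z hz
    have hF := (hDda z hz).hasFDerivAt
    have hF' := hF.hasFDerivWithinAt (s := S)
    have := hF'.fderivWithin (hopen.uniqueDiffWithinAt hz)
    rw [this]
    ext v
    simp
  have hconst : ∀ z ∈ S, D z = 0 := by
    intro z hz
    have := (convex_ball (0:ℂ) 1).is_const_of_fderivWithin_eq_zero hDdiff hDfd hz h0S
    rw [this, hD0]
  have hPh : ∀ z ∈ S, P z = h z := by
    intro z hz
    have h1 : P z - h z = 0 := hconst z hz
    linear_combination h1
  have hQg : ∀ z ∈ S, Q z = g z := by
    intro z hz
    have h1 : P z - h z = 0 := hconst z hz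
    have h2 := hDeq z hz
    linear_combination h1 - h2
  -- witness point
  set t := Real.tan (Real.pi/(2*a)) with ht
  obtain ⟨ht0, ht1⟩ := tan_pos_lt a ha
  set z₀ : ℂ := (t : ℂ) * I with hz₀def
  have hz₀S : z₀ ∈ S := by
    rw [hS, mem_ball_zero_iff, hz₀def]
    rw [norm_mul, Complex.norm_I, Complex.norm_real]
    simp [abs_of_pos ht0]
    rw [ht, abs_of_pos ht0]
    exact ht1
  have hz₀cS : (starRingEnd ℂ) z₀ ∈ S := hball _ hz₀S
  have hne : z₀ ≠ (starRingEnd ℂ) z₀ := by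
    intro heq
    have him := congrArg Complex.im heq
    simp [hz₀def] at him
    have : t = 0 := by linarith
    exact ht0.ne' this
  -- ka at z₀ is real
  have hkval : ka (a:ℂ) z₀ = -(1 / (a:ℂ)) := by
    rw [ka, hz₀def, ht]
    rw [cpow_eq_neg_one a ha]
    have haC : (a:ℂ) ≠ 0 := by exact_mod_cast (show a ≠ 0 by linarith)
    field_simp
    ring
  have hkconj : (starRingEnd ℂ) (ka (a:ℂ) z₀) = ka (a:ℂ) z₀ := by
    rw [hkval]
    rw [map_neg, map_div₀, map_one, Complex.conj_ofReal]
  -- f z₀ = f (conj z₀)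
  have hfh : h ((starRingEnd ℂ) z₀) = (starRingEnd ℂ) (h z₀) := by
    have := hPh _ hz₀cS
    rw [hP] at this
    simp only [Complex.conj_conj] at this
    rw [← this]
  have hfg : g ((starRingEnd ℂ) z₀) = (starRingEnd ℂ) (g z₀) := by
    have := hQg _ hz₀cS
    rw [hQ] at this
    simp only [Complex.conj_conj] at this
    rw [← this]
  have hkk := hshear z₀ hz₀S
  have hfeq : h z₀ + (starRingEnd ℂ) (g z₀)
      = h ((starRingEnd ℂ) z₀) + (starRingEnd ℂ) (g ((starRingEnd ℂ) z₀)) := by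
    rw [hfh, hfg, Complex.conj_conj]
    have e1 : (starRingEnd ℂ) (h z₀) - (starRingEnd ℂ) (g z₀)
        = (starRingEnd ℂ) (ka (a:ℂ) z₀) := by rw [← map_sub, hkk]
    rw [hkconj] at e1
    linear_combination hkk - e1
  have := hinj hz₀S hz₀cS hfeq
  exact hne this
end

section
/- Let a be real, 0 ≤ λ < 1, and f ∈ 𝒦_{a,λ}. Then the pre-Schwarzian norm satisfies ‖P_f‖ := sup_{z∈𝔻} |P_f(z)|(1−|z|²) ≤ 2(1+|a|) + 2λ² + λ. -/
open Complex Metric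

/-! Each of the three summands of `P_f`, weighted by `1 - |z|²`, is bounded separately; the
denominators `1 - z²` and `1 - λz` are bounded below by `1 - |z|²` and `1 - λ|z|`, and what
remains are elementary inequalities in `r = |z| ∈ [0, 1)` and `λ ∈ [0, 1]`. -/

theorem one_sub_norm_mul_le_norm_one_sub_mul {R : Type*} [NormedRing R] [NormOneClass R]
    (w z : R) : 1 - ‖w‖ * ‖z‖ ≤ ‖1 - w * z‖ := by
  calc 1 - ‖w‖ * ‖z‖ ≤ ‖(1 : R)‖ - ‖w * z‖ := by
        rw [norm_one]; linarith [norm_mul_le w z]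
    _ ≤ ‖1 - w * z‖ := norm_sub_norm_le _ _

section UnitDisc

variable {z : ℂ}

theorem norm_two_mul_add_div_one_sub_sq_mul_le (hz : ‖z‖ < 1) (a : ℂ) :
    ‖2 * (z + a) / (1 - z ^ 2)‖ * (1 - ‖z‖ ^ 2) ≤ 2 * (1 + ‖a‖) := by
  have hden : 1 - ‖z‖ ^ 2 ≤ ‖1 - z ^ 2‖ := by
    simpa [sq] using one_sub_norm_mul_le_norm_one_sub_mul z z
  have hden_pos : 0 < 1 - ‖z‖ ^ 2 := by nlinarith [norm_nonneg z]
  have hnum : ‖2 * (z + a)‖ ≤ 2 * (1 + ‖a‖) := by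
    rw [norm_mul, Complex.norm_two]
    linarith [norm_add_le z a]
  rw [norm_div, div_mul_eq_mul_div, div_le_iff₀ (hden_pos.trans_le hden)]
  exact mul_le_mul hnum hden hden_pos.le (by positivity)

theorem norm_div_one_sub_mul_mul_le (hz : ‖z‖ < 1) {w : ℂ} (hw : ‖w‖ ≤ 1) :
    ‖w / (1 - w * z)‖ * (1 - ‖z‖ ^ 2) ≤ ‖w‖ + ‖w‖ ^ 2 := by
  set l := ‖w‖
  set r := ‖z‖
  have hl : 0 ≤ l := norm_nonneg w
  have hr : 0 ≤ r := norm_nonneg z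
  have hden : 1 - l * r ≤ ‖1 - w * z‖ := one_sub_norm_mul_le_norm_one_sub_mul w z
  have hden_pos : 0 < 1 - l * r := by nlinarith
  -- the difference of the two sides is `l ((r - l)² + l (1 - l) (1 + r))`
  have key : l * (1 - r ^ 2) ≤ (l + l ^ 2) * (1 - l * r) := by
    nlinarith [mul_nonneg hl (sq_nonneg (r - l)),
      mul_nonneg (mul_nonneg (mul_nonneg hl hl) (sub_nonneg.mpr hw)) (by positivity : 0 ≤ 1 + r)]
  rw [norm_div, div_mul_eq_mul_div, div_le_iff₀ (hden_pos.trans_le hden)]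
  exact key.trans (mul_le_mul_of_nonneg_left hden (by positivity))

theorem norm_sq_mul_conj_div_mul_le (hz : ‖z‖ < 1) {l : ℝ} (hl : l ^ 2 ≤ 1) :
    ‖(l : ℂ) ^ 2 * (starRingEnd ℂ) z / ((1 - l ^ 2 * ‖z‖ ^ 2 : ℝ) : ℂ)‖ * (1 - ‖z‖ ^ 2)
      ≤ l ^ 2 := by
  set r := ‖z‖
  have hr : 0 ≤ r := norm_nonneg z
  have hden_pos : 0 < 1 - l ^ 2 * r ^ 2 := by nlinarith [sq_nonneg l]
  have hnum : ‖(l : ℂ) ^ 2 * (starRingEnd ℂ) z‖ = l ^ 2 * r := by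
    simp [norm_pow, Complex.norm_real, sq_abs, r]
  rw [norm_div, hnum, Complex.norm_real, Real.norm_of_nonneg hden_pos.le, div_mul_eq_mul_div,
    div_le_iff₀ hden_pos]
  -- `r (1 - r²) ≤ 1 - r² ≤ 1 - l² r²`
  nlinarith [mul_nonneg (sq_nonneg l) (mul_nonneg (by nlinarith : (0:ℝ) ≤ 1 - r ^ 2)
      (by linarith : (0:ℝ) ≤ 1 - r)),
    mul_nonneg (sq_nonneg l) (mul_nonneg (sq_nonneg r) (sub_nonneg.mpr hl))]

end UnitDisc

/-- the pre-Schwarzian norm bound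
`‖P_f‖ ≤ 2(1+|a|) + 2λ² + λ` for `f ∈ 𝒦_{a,λ}`, where
`P_f(z) = 2(z+a)/(1−z²) + λ/(1−λz) + λ²·conj z/(1−λ²|z|²)`. -/
theorem preSchwarzian_norm_bound (a : ℝ) (l : ℝ) (hl : 0 ≤ l) (hl1 : l < 1) :
    ∀ z ∈ ball (0 : ℂ) 1,
      ‖(2 * (z + a) / (1 - z ^ 2) + l / (1 - l * z) +
          (l : ℂ) ^ 2 * (starRingEnd ℂ) z / ((1 - l ^ 2 * ‖z‖ ^ 2 : ℝ) : ℂ))‖ *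
        (1 - ‖z‖ ^ 2) ≤ 2 * (1 + |a|) + 2 * l ^ 2 + l := by
  intro z hz
  rw [mem_ball_zero_iff] at hz
  have hweight : 0 ≤ 1 - ‖z‖ ^ 2 := by nlinarith [norm_nonneg z]
  have hnorm_l : ‖(l : ℂ)‖ = l := by rw [Complex.norm_real, Real.norm_of_nonneg hl]
  have h1 := norm_two_mul_add_div_one_sub_sq_mul_le hz (a : ℂ)
  have h2 := norm_div_one_sub_mul_mul_le hz (w := (l : ℂ)) (hnorm_l.trans_le hl1.le)
  have h3 := norm_sq_mul_conj_div_mul_le hz (l := l) (by nlinarith)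
  rw [Complex.norm_real, Real.norm_eq_abs] at h1
  rw [hnorm_l] at h2
  refine (mul_le_mul_of_nonneg_right norm_add₃_le hweight).trans ?_
  rw [add_mul, add_mul]
  linarith
end

section
/- For all z in the open unit disk, |2(z+a)/(1−z²)|·(1−|z|²) ≤ 2(1+|a|), where a is a real number. -/
open Complex Metric

theorem one_sub_norm_sq_le_norm_one_sub_sq {R : Type*} [NormedRing R] [NormOneClass R] (z : R) :
    1 - ‖z‖ ^ 2 ≤ ‖1 - z ^ 2‖ := by
  calc 1 - ‖z‖ ^ 2 ≤ ‖(1 : R)‖ - ‖z ^ 2‖ := by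
        rw [norm_one]; linarith [norm_pow_le z 2]
    _ ≤ ‖1 - z ^ 2‖ := norm_sub_norm_le _ _

/-- The factor `1 - ‖z‖²` never exceeds `‖1 - z²‖`, so it cancels the denominator; if `1 - z² = 0`
the quotient is `0` by Lean's convention and the bound is trivial. -/
theorem norm_div_one_sub_sq_mul_le {K : Type*} [NormedDivisionRing K] (w z : K) :
    ‖w / (1 - z ^ 2)‖ * (1 - ‖z‖ ^ 2) ≤ ‖w‖ := by
  rw [norm_div]
  rcases (norm_nonneg (1 - z ^ 2)).eq_or_lt with hzero | hpos
  · rw [← hzero, div_zero, zero_mul]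
    exact norm_nonneg w
  · calc ‖w‖ / ‖1 - z ^ 2‖ * (1 - ‖z‖ ^ 2) ≤ ‖w‖ / ‖1 - z ^ 2‖ * ‖1 - z ^ 2‖ := by
          gcongr
          exact one_sub_norm_sq_le_norm_one_sub_sq z
      _ = ‖w‖ := div_mul_cancel₀ _ hpos.ne'

/-- `|2(z+a)/(1−z²)|·(1−|z|²) ≤ 2(1+|a|)` on the unit disk. -/
theorem analytic_part_bound (a : ℝ) :
    ∀ z ∈ ball (0 : ℂ) 1,
      ‖(2 * (z + a) / (1 - z ^ 2) : ℂ)‖ * (1 - ‖z‖ ^ 2) ≤ 2 * (1 + |a|) := by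
  intro z hz
  have hz : ‖z‖ < 1 := mem_ball_zero_iff.mp hz
  have hnum : ‖(2 * (z + a) : ℂ)‖ ≤ 2 * (1 + |a|) := by
    rw [norm_mul, Complex.norm_two]
    gcongr
    calc ‖z + a‖ ≤ ‖z‖ + ‖(a : ℂ)‖ := norm_add_le _ _
      _ ≤ 1 + |a| := by rw [Complex.norm_real, Real.norm_eq_abs]; linarith
  exact (norm_div_one_sub_sq_mul_le _ z).trans hnum
end

section
/- Let a be real and 0 ≤ λ < 1, and let f = h + conj(g) ∈ 𝒦_{a,λ} with power series h(z) = z + Σ_{n≥2} a_n z^n, g(z) = Σ_{n≥1} b_n z^n. Then a_2 = a + λ/2, b_2 = λ/2, a_3 = (λ² + 2aλ + 2a² + 1)/3, b_3 = λ²/3 + 2aλ/3, a_4 = a³/3 + 2a/3 + (λ/4)(λ² + 2aλ + 2a² + 1), and b_4 = (λ/4)(λ² + 2aλ + 2a² + 1). -/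
open Complex Metric

lemma ksol_one_sub_ne (z : ℂ) (hz : z ∈ ball (0:ℂ) 1) : (1:ℂ) - z ≠ 0 := by
  simp only [mem_ball, dist_zero_right] at hz
  intro hc
  have : z = 1 := by linear_combination -hc
  rw [this] at hz; norm_num at hz

lemma ksol_one_add_ne (z : ℂ) (hz : z ∈ ball (0:ℂ) 1) : (1:ℂ) + z ≠ 0 := by
  simp only [mem_ball, dist_zero_right] at hz
  intro hc
  have : z = -1 := by linear_combination hc
  rw [this] at hz; norm_num at hz

lemma ksol_q_slit (z : ℂ) (hz : z ∈ ball (0:ℂ) 1) : (1+z)/(1-z) ∈ Complex.slitPlane := by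
  have h1 := ksol_one_sub_ne z hz
  simp only [mem_ball, dist_zero_right] at hz
  have hns : Complex.normSq z < 1 := by
    rw [← Complex.sq_norm]
    have : ‖z‖ < 1 := hz
    nlinarith [norm_nonneg z]
  rw [Complex.mem_slitPlane_iff]
  left
  rw [Complex.div_re]
  have hpos : 0 < Complex.normSq (1 - z) := by rwa [Complex.normSq_pos]
  rw [← add_div]
  apply div_pos _ hpos
  simp only [Complex.add_re, Complex.sub_re, Complex.one_re, Complex.add_im, Complex.sub_im,
    Complex.one_im, Complex.normSq_apply] at *
  nlinarith

lemma ksol_q_hasDerivAt (z : ℂ) (hz : z ∈ ball (0:ℂ) 1) :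
    HasDerivAt (fun y : ℂ => (1+y)/(1-y)) (2/(1-z)^2) z := by
  have h1 := ksol_one_sub_ne z hz
  have hu : HasDerivAt (fun y : ℂ => 1+y) 1 z := by
    simpa using (hasDerivAt_id z).const_add 1
  have hv : HasDerivAt (fun y : ℂ => 1-y) (-1) z := by
    simpa using (hasDerivAt_id z).const_sub 1
  have := hu.div hv h1
  exact this.congr_deriv (by ring)

lemma ksol_w_hasDerivAt (a : ℂ) (z : ℂ) (hz : z ∈ ball (0:ℂ) 1) :
    HasDerivAt (fun y : ℂ => ((1+y)/(1-y)) ^ a)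
      (a * ((1+z)/(1-z)) ^ (a-1) * (2/(1-z)^2)) z :=
  (ksol_q_hasDerivAt z hz).cpow_const (ksol_q_slit z hz)

lemma ksol_w_analytic (a : ℂ) :
    AnalyticOnNhd ℂ (fun y : ℂ => ((1+y)/(1-y)) ^ a) (ball (0:ℂ) 1) := by
  intro z hz
  exact AnalyticAt.cpow
    ((analyticAt_const.add analyticAt_id).div (analyticAt_const.sub analyticAt_id)
      (ksol_one_sub_ne z hz)) analyticAt_const (ksol_q_slit z hz)

lemma ksol_w_ode (a : ℂ) (z : ℂ) (hz : z ∈ ball (0:ℂ) 1) :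
    (1 - z^2) * deriv (fun y : ℂ => ((1+y)/(1-y)) ^ a) z
      = 2 * a * ((1+z)/(1-z)) ^ a := by
  have h1 := ksol_one_sub_ne z hz
  have h2 := ksol_one_add_ne z hz
  have hq : (1+z)/(1-z) ≠ 0 := div_ne_zero h2 h1
  rw [(ksol_w_hasDerivAt a z hz).deriv]
  rw [Complex.cpow_sub _ _ hq, Complex.cpow_one]
  have h3 : (1:ℂ) - z^2 = (1-z)*(1+z) := by ring
  rw [h3]
  field_simp

lemma ksol_deriv_eq_on {F G : ℂ → ℂ} {s : Set ℂ} (hs : IsOpen s)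
    (hFG : ∀ z ∈ s, F z = G z) {z : ℂ} (hz : z ∈ s) : deriv F z = deriv G z :=
  Filter.EventuallyEq.deriv_eq (Filter.eventuallyEq_of_mem (hs.mem_nhds hz) hFG)

/-- the initial Taylor coefficients of `f = h + conj g ∈ 𝒦_{a,λ}`,
where `a_n = h^(n)(0)/n!` and `b_n = g^(n)(0)/n!`. -/
theorem coefficients_of_K_a_l (a : ℝ) (l : ℝ) (hl : 0 ≤ l) (hl1 : l < 1)
    (h g : ℂ → ℂ)
    (hhd : DifferentiableOn ℂ h (ball (0 : ℂ) 1))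
    (hgd : DifferentiableOn ℂ g (ball (0 : ℂ) 1))
    (hh0 : h 0 = 0) (hg0 : g 0 = 0) (hh1 : deriv h 0 = 1)
    (hshear : ∀ z ∈ ball (0 : ℂ) 1, h z - g z = ka a z)
    (hdil : ∀ z ∈ ball (0 : ℂ) 1, deriv g z = (l : ℂ) * z * deriv h z) :
    iteratedDeriv 2 h 0 / 2 = (a : ℂ) + l / 2 ∧
    iteratedDeriv 2 g 0 / 2 = (l : ℂ) / 2 ∧
    iteratedDeriv 3 h 0 / 6 = ((l : ℂ) ^ 2 + 2 * a * l + 2 * (a : ℂ) ^ 2 + 1) / 3 ∧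
    iteratedDeriv 3 g 0 / 6 = (l : ℂ) ^ 2 / 3 + 2 * a * l / 3 ∧
    iteratedDeriv 4 h 0 / 24 =
      (a : ℂ) ^ 3 / 3 + 2 * a / 3 +
        ((l : ℂ) / 4) * ((l : ℂ) ^ 2 + 2 * a * l + 2 * (a : ℂ) ^ 2 + 1) ∧
    iteratedDeriv 4 g 0 / 24 =
      ((l : ℂ) / 4) * ((l : ℂ) ^ 2 + 2 * a * l + 2 * (a : ℂ) ^ 2 + 1) := by
  have h0s : (0:ℂ) ∈ ball (0:ℂ) 1 := by simp
  have hso : IsOpen (ball (0:ℂ) 1) := isOpen_ball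
  by_cases ha : (a:ℂ) = 0
  · exfalso
    have heq : ∀ z ∈ ball (0:ℂ) 1, h z = g z := by
      intro z hz
      have hk := hshear z hz
      rw [ka, ha] at hk
      simp at hk
      linear_combination hk
    have hder : deriv h 0 = deriv g 0 :=
      ksol_deriv_eq_on hso heq h0s
    rw [hh1, hdil 0 h0s] at hder
    simp at hder
  -- main case
  set A : ℂ := (a:ℂ) with hA
  set L : ℂ := (l:ℂ) with hL
  set w : ℂ → ℂ := fun y => ((1+y)/(1-y)) ^ A with hwdef
  have hAn : AnalyticOnNhd ℂ h (ball (0:ℂ) 1) := hhd.analyticOnNhd hso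
  have gAn : AnalyticOnNhd ℂ g (ball (0:ℂ) 1) := hgd.analyticOnNhd hso
  have wAn : AnalyticOnNhd ℂ w (ball (0:ℂ) 1) := ksol_w_analytic A
  have hAn1 := hAn.deriv; have hAn2 := hAn1.deriv; have hAn3 := hAn2.deriv
  have gAn1 := gAn.deriv; have gAn2 := gAn1.deriv; have gAn3 := gAn2.deriv
  have wAn1 := wAn.deriv; have wAn2 := wAn1.deriv; have wAn3 := wAn2.deriv
  -- ODE cascade for w
  have W0 : ∀ z ∈ ball (0:ℂ) 1, (1 - z^2) * deriv w z = 2*A * w z :=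
    fun z hz => ksol_w_ode A z hz
  have W1 : ∀ z ∈ ball (0:ℂ) 1,
      (1 - z^2) * deriv (deriv w) z = (2*A + 2*z) * deriv w z := by
    intro z hz
    have e := ksol_deriv_eq_on (F := fun y => (1-y^2) * deriv w y)
      (G := fun y => 2*A * w y) hso W0 hz
    have hp : HasDerivAt (fun y : ℂ => 1 - y^2) (-(2*z)) z := by
      simpa using ((hasDerivAt_pow 2 z).const_sub 1)
    have dl := hp.mul (wAn1 z hz).differentiableAt.hasDerivAt
    have dr := ((wAn z hz).differentiableAt.hasDerivAt).const_mul (2*A)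
    erw [dl.deriv, dr.deriv] at e
    linear_combination e
  have W2 : ∀ z ∈ ball (0:ℂ) 1,
      (1 - z^2) * deriv (deriv (deriv w)) z
        = (2*A + 4*z) * deriv (deriv w) z + 2 * deriv w z := by
    intro z hz
    have e := ksol_deriv_eq_on (F := fun y => (1-y^2) * deriv (deriv w) y)
      (G := fun y => (2*A + 2*y) * deriv w y) hso W1 hz
    have hp : HasDerivAt (fun y : ℂ => 1 - y^2) (-(2*z)) z := by
      simpa using ((hasDerivAt_pow 2 z).const_sub 1)
    have hq : HasDerivAt (fun y : ℂ => 2*A + 2*y) 2 z := by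
      simpa using ((hasDerivAt_id z).const_mul 2).const_add (2*A)
    have dl := hp.mul (wAn2 z hz).differentiableAt.hasDerivAt
    have dr := hq.mul (wAn1 z hz).differentiableAt.hasDerivAt
    erw [dl.deriv, dr.deriv] at e
    linear_combination e
  have W3 : ∀ z ∈ ball (0:ℂ) 1,
      (1 - z^2) * deriv (deriv (deriv (deriv w))) z
        = (2*A + 6*z) * deriv (deriv (deriv w)) z + 6 * deriv (deriv w) z := by
    intro z hz
    have e := ksol_deriv_eq_on (F := fun y => (1-y^2) * deriv (deriv (deriv w)) y)
      (G := fun y => (2*A + 4*y) * deriv (deriv w) y + 2 * deriv w y) hso W2 hz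
    have hp : HasDerivAt (fun y : ℂ => 1 - y^2) (-(2*z)) z := by
      simpa using ((hasDerivAt_pow 2 z).const_sub 1)
    have hq : HasDerivAt (fun y : ℂ => 2*A + 4*y) 4 z := by
      simpa using ((hasDerivAt_id z).const_mul 4).const_add (2*A)
    have dl := hp.mul (wAn3 z hz).differentiableAt.hasDerivAt
    have dr := (hq.mul (wAn2 z hz).differentiableAt.hasDerivAt).add
      (((wAn1 z hz).differentiableAt.hasDerivAt).const_mul 2)
    erw [dl.deriv, dr.deriv] at e
    linear_combination e
  -- values of w's derivatives at 0
  have w00 : w 0 = 1 := by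
    simp only [hwdef]
    norm_num
  have v1 : deriv w 0 = 2*A := by
    have := W0 0 h0s
    rw [w00] at this
    simpa using this
  have v2 : deriv (deriv w) 0 = 4*A^2 := by
    have := W1 0 h0s
    rw [v1] at this
    simp at this
    linear_combination this
  have v3 : deriv (deriv (deriv w)) 0 = 8*A^3 + 4*A := by
    have := W2 0 h0s
    rw [v1, v2] at this
    simp at this
    linear_combination this
  have v4 : deriv (deriv (deriv (deriv w))) 0 = 16*A^4 + 32*A^2 := by
    have := W3 0 h0s
    rw [v2, v3] at this
    simp at this
    linear_combination this
  -- shear cascade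
  have S0 : ∀ z ∈ ball (0:ℂ) 1, h z - g z = 1/(2*A) * (w z - 1) := by
    intro z hz
    simpa [ka, hwdef] using hshear z hz
  have S1 : ∀ z ∈ ball (0:ℂ) 1,
      deriv h z - deriv g z = 1/(2*A) * deriv w z := by
    intro z hz
    have e := ksol_deriv_eq_on (F := fun y => h y - g y)
      (G := fun y => 1/(2*A) * (w y - 1)) hso S0 hz
    have dl := ((hAn z hz).differentiableAt.hasDerivAt).sub
      ((gAn z hz).differentiableAt.hasDerivAt)
    have dr := (((wAn z hz).differentiableAt.hasDerivAt).sub_const 1).const_mul (1/(2*A))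
    erw [dl.deriv, dr.deriv] at e
    linear_combination e
  have S2 : ∀ z ∈ ball (0:ℂ) 1,
      deriv (deriv h) z - deriv (deriv g) z = 1/(2*A) * deriv (deriv w) z := by
    intro z hz
    have e := ksol_deriv_eq_on (F := fun y => deriv h y - deriv g y)
      (G := fun y => 1/(2*A) * deriv w y) hso S1 hz
    have dl := ((hAn1 z hz).differentiableAt.hasDerivAt).sub
      ((gAn1 z hz).differentiableAt.hasDerivAt)
    have dr := ((wAn1 z hz).differentiableAt.hasDerivAt).const_mul (1/(2*A))
    erw [dl.deriv, dr.deriv] at e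
    linear_combination e
  have S3 : ∀ z ∈ ball (0:ℂ) 1,
      deriv (deriv (deriv h)) z - deriv (deriv (deriv g)) z
        = 1/(2*A) * deriv (deriv (deriv w)) z := by
    intro z hz
    have e := ksol_deriv_eq_on (F := fun y => deriv (deriv h) y - deriv (deriv g) y)
      (G := fun y => 1/(2*A) * deriv (deriv w) y) hso S2 hz
    have dl := ((hAn2 z hz).differentiableAt.hasDerivAt).sub
      ((gAn2 z hz).differentiableAt.hasDerivAt)
    have dr := ((wAn2 z hz).differentiableAt.hasDerivAt).const_mul (1/(2*A))
    erw [dl.deriv, dr.deriv] at e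
    linear_combination e
  have S4 : ∀ z ∈ ball (0:ℂ) 1,
      deriv (deriv (deriv (deriv h))) z - deriv (deriv (deriv (deriv g))) z
        = 1/(2*A) * deriv (deriv (deriv (deriv w))) z := by
    intro z hz
    have e := ksol_deriv_eq_on
      (F := fun y => deriv (deriv (deriv h)) y - deriv (deriv (deriv g)) y)
      (G := fun y => 1/(2*A) * deriv (deriv (deriv w)) y) hso S3 hz
    have dl := ((hAn3 z hz).differentiableAt.hasDerivAt).sub
      ((gAn3 z hz).differentiableAt.hasDerivAt)
    have dr := ((wAn3 z hz).differentiableAt.hasDerivAt).const_mul (1/(2*A))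
    erw [dl.deriv, dr.deriv] at e
    linear_combination e
  -- dilatation cascade
  have D1 : ∀ z ∈ ball (0:ℂ) 1,
      deriv (deriv g) z = L * deriv h z + (L*z) * deriv (deriv h) z := by
    intro z hz
    have e := ksol_deriv_eq_on (F := fun y => deriv g y)
      (G := fun y => L * y * deriv h y) hso hdil hz
    have dr := ((hasDerivAt_id z).const_mul L).mul
      ((hAn1 z hz).differentiableAt.hasDerivAt)
    simp only [id_eq, mul_one] at dr
    erw [dr.deriv] at e
    linear_combination e
  have D2 : ∀ z ∈ ball (0:ℂ) 1,
      deriv (deriv (deriv g)) z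
        = 2*L * deriv (deriv h) z + (L*z) * deriv (deriv (deriv h)) z := by
    intro z hz
    have e := ksol_deriv_eq_on (F := fun y => deriv (deriv g) y)
      (G := fun y => L * deriv h y + (L*y) * deriv (deriv h) y) hso D1 hz
    have dr := (((hAn1 z hz).differentiableAt.hasDerivAt).const_mul L).add
      (((hasDerivAt_id z).const_mul L).mul ((hAn2 z hz).differentiableAt.hasDerivAt))
    simp only [id_eq, mul_one] at dr
    erw [dr.deriv] at e
    linear_combination e
  have D3 : ∀ z ∈ ball (0:ℂ) 1,
      deriv (deriv (deriv (deriv g))) z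
        = 3*L * deriv (deriv (deriv h)) z + (L*z) * deriv (deriv (deriv (deriv h))) z := by
    intro z hz
    have e := ksol_deriv_eq_on (F := fun y => deriv (deriv (deriv g)) y)
      (G := fun y => 2*L * deriv (deriv h) y + (L*y) * deriv (deriv (deriv h)) y) hso D2 hz
    have dr := (((hAn2 z hz).differentiableAt.hasDerivAt).const_mul (2*L)).add
      (((hasDerivAt_id z).const_mul L).mul ((hAn3 z hz).differentiableAt.hasDerivAt))
    simp only [id_eq, mul_one] at dr
    erw [dr.deriv] at e
    linear_combination e
  -- extract values at 0
  have d2 : deriv (deriv g) 0 = L := by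
    have := D1 0 h0s
    rw [hh1] at this
    simpa using this
  have key2 : (1:ℂ)/(2*A) * (4*A^2) = 2*A := by field_simp; ring
  have key3 : (1:ℂ)/(2*A) * (8*A^3 + 4*A) = 4*A^2 + 2 := by field_simp; ring
  have key4 : (1:ℂ)/(2*A) * (16*A^4 + 32*A^2) = 8*A^3 + 16*A := by field_simp; ring
  have c2 : deriv (deriv h) 0 = 2*A + L := by
    have e := S2 0 h0s
    rw [v2, d2, key2] at e
    linear_combination e
  have d3 : deriv (deriv (deriv g)) 0 = 2*L*(2*A + L) := by
    have := D2 0 h0s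
    rw [c2] at this
    simp at this
    linear_combination this
  have c3 : deriv (deriv (deriv h)) 0 = 4*A^2 + 2 + 2*L*(2*A + L) := by
    have e := S3 0 h0s
    rw [v3, d3, key3] at e
    linear_combination e
  have d4 : deriv (deriv (deriv (deriv g))) 0 = 3*L*(4*A^2 + 2 + 2*L*(2*A + L)) := by
    have := D3 0 h0s
    rw [c3] at this
    simp at this
    linear_combination this
  have c4 : deriv (deriv (deriv (deriv h))) 0
      = 8*A^3 + 16*A + 3*L*(4*A^2 + 2 + 2*L*(2*A + L)) := by
    have e := S4 0 h0s
    rw [v4, d4, key4] at e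
    linear_combination e
  have it2 : ∀ f : ℂ → ℂ, iteratedDeriv 2 f = deriv (deriv f) := by
    intro f
    rw [show (2:ℕ) = 1+1 from rfl, iteratedDeriv_succ, iteratedDeriv_one]
  have it3 : ∀ f : ℂ → ℂ, iteratedDeriv 3 f = deriv (deriv (deriv f)) := by
    intro f
    rw [show (3:ℕ) = 2+1 from rfl, iteratedDeriv_succ, it2]
  have it4 : ∀ f : ℂ → ℂ, iteratedDeriv 4 f = deriv (deriv (deriv (deriv f))) := by
    intro f
    rw [show (4:ℕ) = 3+1 from rfl, iteratedDeriv_succ, it3]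
  rw [it2, it2, it3, it3, it4, it4, c2, d2, c3, d3, c4, d4]
  refine ⟨by ring, by ring, by ring, by ring, by ring, by ring⟩
end

section
/- Let a be real with −1 < a < 1 and 0 ≤ λ < 1, and let h' (z) = (1+z)^(a−1)/((1−z)^(a+1)(1−λz)) on 𝔻. Then for |z| = r < 1: 1/((1+λr)(1+r)²) ≤ |h'(z)| ≤ 1/((1−λr)(1−r)²). -/
open Complex Metric

lemma aux_rpow_ident (a s t : ℝ) (hs : 0 < s) :
    s ^ (a - 1) / (s ^ (a + 1) * t) = 1 / (t * s ^ 2) := by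
  have h2 : s ^ ((-2 : ℝ)) = (s ^ 2)⁻¹ := by
    rw [Real.rpow_neg hs.le, Real.rpow_two]
  rw [show a - 1 = (a + 1) + (-2) by ring, Real.rpow_add hs, h2]
  have hpos : (0:ℝ) < s ^ (a + 1) := Real.rpow_pos_of_pos hs _
  rcases eq_or_ne t 0 with rfl | ht
  · simp
  · field_simp

lemma aux_bounds (a r l A B C : ℝ) (ha1 : -1 < a) (ha2 : a < 1)
    (hr0 : 0 ≤ r) (hr : r < 1) (hl0 : 0 ≤ l) (hl1 : l < 1)
    (hA1 : 1 - r ≤ A) (hA2 : A ≤ 1 + r)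
    (hB1 : 1 - r ≤ B) (hB2 : B ≤ 1 + r)
    (hC1 : 1 - l * r ≤ C) (hC2 : C ≤ 1 + l * r) :
    1 / ((1 + l * r) * (1 + r) ^ 2) ≤ A ^ (a - 1) / (B ^ (a + 1) * C) ∧
    A ^ (a - 1) / (B ^ (a + 1) * C) ≤ 1 / ((1 - l * r) * (1 - r) ^ 2) := by
  have hr1 : (0:ℝ) < 1 - r := by linarith
  have hr2 : (0:ℝ) < 1 + r := by linarith
  have hlr : l * r < 1 := by nlinarith
  have hlr1 : (0:ℝ) < 1 - l * r := by linarith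
  have hlr2 : (0:ℝ) < 1 + l * r := by positivity
  have hA0 : 0 < A := lt_of_lt_of_le hr1 hA1
  have hB0 : 0 < B := lt_of_lt_of_le hr1 hB1
  have hC0 : 0 < C := lt_of_lt_of_le hlr1 hC1
  have ha1' : a - 1 ≤ 0 := by linarith
  have ha2' : 0 ≤ a + 1 := by linarith
  constructor
  · calc 1 / ((1 + l * r) * (1 + r) ^ 2)
        = (1 + r) ^ (a - 1) / ((1 + r) ^ (a + 1) * (1 + l * r)) :=
          (aux_rpow_ident a (1 + r) (1 + l * r) hr2).symm
      _ ≤ A ^ (a - 1) / (B ^ (a + 1) * C) := by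
          apply div_le_div₀ (Real.rpow_nonneg hA0.le _)
            (Real.rpow_le_rpow_of_nonpos hA0 hA2 ha1')
            (mul_pos (Real.rpow_pos_of_pos hB0 _) hC0)
          exact mul_le_mul (Real.rpow_le_rpow hB0.le hB2 ha2') hC2 hC0.le
            (Real.rpow_nonneg hr2.le _)
  · calc A ^ (a - 1) / (B ^ (a + 1) * C)
        ≤ (1 - r) ^ (a - 1) / ((1 - r) ^ (a + 1) * (1 - l * r)) := by
          apply div_le_div₀ (Real.rpow_nonneg hr1.le _)
            (Real.rpow_le_rpow_of_nonpos hr1 hA1 ha1')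
            (mul_pos (Real.rpow_pos_of_pos hr1 _) hlr1)
          exact mul_le_mul (Real.rpow_le_rpow hr1.le hB1 ha2') hC1 hlr1.le
            (Real.rpow_nonneg hB0.le _)
      _ = 1 / ((1 - l * r) * (1 - r) ^ 2) :=
          aux_rpow_ident a (1 - r) (1 - l * r) hr1

/-- growth estimate for `h'` when `−1 < a < 1`. -/
theorem deriv_h_bounds_abs_a_lt_one (a : ℝ) (ha1 : -1 < a) (ha2 : a < 1)
    (l : ℝ) (hl : 0 ≤ l) (hl1 : l < 1)
    (h : ℂ → ℂ)
    (hh' : ∀ z ∈ ball (0 : ℂ) 1,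
      deriv h z = (1 + z) ^ ((a : ℂ) - 1) / ((1 - z) ^ ((a : ℂ) + 1) * (1 - l * z))) :
    ∀ z : ℂ, ∀ r : ℝ, ‖z‖ = r → r < 1 →
      1 / ((1 + l * r) * (1 + r) ^ 2) ≤ ‖deriv h z‖ ∧
      ‖deriv h z‖ ≤ 1 / ((1 - l * r) * (1 - r) ^ 2) := by
  intro z r hzr hr
  have hr0 : 0 ≤ r := hzr ▸ norm_nonneg z
  have hz : z ∈ ball (0 : ℂ) 1 := by
    simp [mem_ball_zero_iff, hzr, hr]
  have hr1 : (0:ℝ) < 1 - r := by linarith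
  -- norm bounds on the three factors
  have hA1 : 1 - r ≤ ‖1 + z‖ := by
    have := norm_sub_norm_le (1 : ℂ) (-z)
    simpa [hzr] using this
  have hA2 : ‖1 + z‖ ≤ 1 + r := by
    have := norm_add_le (1 : ℂ) z
    simpa [hzr] using this
  have hB1 : 1 - r ≤ ‖1 - z‖ := by
    have := norm_sub_norm_le (1 : ℂ) z
    simpa [hzr] using this
  have hB2 : ‖1 - z‖ ≤ 1 + r := by
    have := norm_sub_le (1 : ℂ) z
    simpa [hzr] using this
  have hlz : ‖(l : ℂ) * z‖ = l * r := by
    rw [norm_mul, Complex.norm_real, Real.norm_of_nonneg hl, hzr]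
  have hC1 : 1 - l * r ≤ ‖1 - (l : ℂ) * z‖ := by
    have := norm_sub_norm_le (1 : ℂ) ((l : ℂ) * z)
    simpa [hlz, abs_of_nonneg hl, hzr] using this
  have hC2 : ‖1 - (l : ℂ) * z‖ ≤ 1 + l * r := by
    have := norm_sub_le (1 : ℂ) ((l : ℂ) * z)
    simpa [hlz, abs_of_nonneg hl, hzr] using this
  have hA0 : (1 : ℂ) + z ≠ 0 := by
    intro h0
    rw [h0, norm_zero] at hA1
    linarith
  have hB0 : (1 : ℂ) - z ≠ 0 := by
    intro h0
    rw [h0, norm_zero] at hB1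
    linarith
  -- compute the norm of the derivative
  have hnorm : ∀ (w : ℂ) (b : ℝ), w ≠ 0 → ‖w ^ (b : ℂ)‖ = ‖w‖ ^ b := by
    intro w b hw
    rw [Complex.norm_cpow_of_ne_zero hw]
    simp
  have hderiv : ‖deriv h z‖ =
      ‖1 + z‖ ^ (a - 1) / (‖1 - z‖ ^ (a + 1) * ‖1 - (l : ℂ) * z‖) := by
    rw [hh' z hz, norm_div, norm_mul]
    rw [show ((a : ℂ) - 1) = ((a - 1 : ℝ) : ℂ) by push_cast; ring,
        show ((a : ℂ) + 1) = ((a + 1 : ℝ) : ℂ) by push_cast; ring,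
        hnorm _ _ hA0, hnorm _ _ hB0]
  rw [hderiv]
  exact aux_bounds a r l _ _ _ ha1 ha2 hr0 hr hl hl1 hA1 hA2 hB1 hB2 hC1 hC2
end
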